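/- Let n ≥ 4 and 1 ≤ p < ⌊n/2⌋. Suppose there exists a homeomorphism f ∈ W^{1,p}((-1,1)ⁿ, ℝⁿ) with J_f > 0 on a set of positive measure and J_f < 0 on a set of positive measure. Then there is no sequence of maps f_k : (-1,1)ⁿ → ℝⁿ, each locally Lipschitz with Jacobian of constant a.e. sign (J_{f_k} ≥ 0 a.e. or J_{f_k} ≤ 0 a.e.), such that f_k → f in W^{1,p}_loc((-1,1)ⁿ, ℝⁿ). -/

import Mathlib

/-!
Convergence of the differentials in `L^p(K)` on a compact `K ⊆ Q` gives a.e. convergence along a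
subsequence, and `det` is continuous, so a sign of the Jacobians `J_{f_k}` shared by infinitely
many `k` passes to `J_f` a.e. on `K`. Inner regularity of Lebesgue measure yields a compact
`K ⊆ Q` on which `J_f > 0` and `J_f < 0` both hold on sets of positive measure.
-/

open Set MeasureTheory Filter Metric

noncomputable def jacobian {n : ℕ} (g : (Fin n → ℝ) → (Fin n → ℝ)) (x : Fin n → ℝ) : ℝ :=
  LinearMap.det ((fderiv ℝ g x) : (Fin n → ℝ) →ₗ[ℝ] (Fin n → ℝ))

namespace MeasureTheory

variable {α E : Type*} [MeasurableSpace α] {μ : Measure α} [MetricSpace E]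
  {u : ℕ → α → E} {v : α → E}

theorem TendstoInMeasure.comp_tendsto {ns : ℕ → ℕ} (h : TendstoInMeasure μ u atTop v)
    (hns : Tendsto ns atTop atTop) : TendstoInMeasure μ (fun k => u (ns k)) atTop v :=
  fun ε hε => (h ε hε).comp hns

theorem TendstoInMeasure.ae_mem_of_frequently {C : Set E} (hC : IsClosed C)
    (h : TendstoInMeasure μ u atTop v) (hu : ∃ᶠ k in atTop, ∀ᵐ x ∂μ, u k x ∈ C) :
    ∀ᵐ x ∂μ, v x ∈ C := by
  obtain ⟨ms, hms, hmsC⟩ := extraction_of_frequently_atTop hu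
  obtain ⟨ns, -, hlim⟩ := (h.comp_tendsto hms.tendsto_atTop).exists_seq_tendsto_ae
  filter_upwards [hlim, ae_all_iff.2 fun i => hmsC (ns i)] with x hx hxC
  exact hC.mem_of_tendsto hx (Eventually.of_forall hxC)

theorem TendstoInMeasure.ae_nonneg_or_ae_nonpos {φ : E → ℝ} (hφ : Continuous φ)
    (h : TendstoInMeasure μ u atTop v)
    (hu : ∀ k, (∀ᵐ x ∂μ, 0 ≤ φ (u k x)) ∨ ∀ᵐ x ∂μ, φ (u k x) ≤ 0) :
    (∀ᵐ x ∂μ, 0 ≤ φ (v x)) ∨ ∀ᵐ x ∂μ, φ (v x) ≤ 0 := by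
  by_cases hfreq : ∃ᶠ k in atTop, ∀ᵐ x ∂μ, 0 ≤ φ (u k x)
  · exact Or.inl <| h.ae_mem_of_frequently (C := {y | 0 ≤ φ y})
      (isClosed_le continuous_const hφ) hfreq
  · refine Or.inr <| h.ae_mem_of_frequently (C := {y | φ y ≤ 0})
      (isClosed_le hφ continuous_const) ?_
    exact (not_frequently.1 hfreq |>.mono fun k hk => (hu k).resolve_left hk).frequently

theorem measure_eq_zero_of_ae_restrict_of_forall_not {s t : Set α} {P : α → Prop}
    (hs : MeasurableSet s) (hst : s ⊆ t)
    (hP : ∀ᵐ x ∂μ.restrict t, P x) (hsP : ∀ x ∈ s, ¬ P x) : μ s = 0 := by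
  rw [measure_eq_zero_iff_ae_notMem]
  filter_upwards [(ae_restrict_iff' hs).1 (ae_restrict_of_ae_restrict_of_subset hst hP)]
    with x hx hxs using hsP x hxs (hx hxs)

end MeasureTheory

theorem measurable_jacobian {n : ℕ} (g : (Fin n → ℝ) → (Fin n → ℝ)) :
    Measurable (jacobian g) :=
  ContinuousLinearMap.continuous_det.measurable.comp (measurable_fderiv ℝ g)

theorem stmt_10_general (n : ℕ) (p : ℝ) (hp1 : 1 ≤ p)
    (Q : Set (Fin n → ℝ)) (hQ : Q = Set.pi univ fun _ : Fin n => Ioo (-1 : ℝ) 1)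
    (f : (Fin n → ℝ) → (Fin n → ℝ))
    -- the Jacobian changes sign on sets of positive measure
    (hpos : 0 < volume {x ∈ Q | 0 < jacobian f x})
    (hneg : 0 < volume {x ∈ Q | jacobian f x < 0}) :
    ¬ ∃ fk : ℕ → (Fin n → ℝ) → (Fin n → ℝ),
      -- each fk is locally Lipschitz on Q
      (∀ k, ∀ x ∈ Q, ∃ ε > 0, ∃ K : NNReal, LipschitzOnWith K (fk k) (ball x ε ∩ Q)) ∧
      -- each fk has a Jacobian of constant a.e. sign
      (∀ k, (∀ᵐ x ∂(volume.restrict Q), 0 ≤ jacobian (fk k) x) ∨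
            (∀ᵐ x ∂(volume.restrict Q), jacobian (fk k) x ≤ 0)) ∧
      -- fk → f in W^{1,p}_loc(Q, ℝⁿ)
      (∀ K : Set (Fin n → ℝ), K ⊆ Q → IsCompact K →
        Tendsto (fun k => eLpNorm (fun x => fk k x - f x) (ENNReal.ofReal p)
          (volume.restrict K)) atTop (nhds 0) ∧
        Tendsto (fun k => eLpNorm (fun x => fderiv ℝ (fk k) x - fderiv ℝ f x)
          (ENNReal.ofReal p) (volume.restrict K)) atTop (nhds 0)) := by
  rintro ⟨fk, -, hsign, hconv⟩
  have hQmeas : MeasurableSet Q := hQ ▸ MeasurableSet.univ_pi fun _ => measurableSet_Ioo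
  obtain ⟨Kp, hKp, hKpc, hKp0⟩ := (hQmeas.inter (measurableSet_lt measurable_const
    (measurable_jacobian f))).exists_lt_isCompact hpos
  obtain ⟨Kn, hKn, hKnc, hKn0⟩ := (hQmeas.inter (measurableSet_lt (measurable_jacobian f)
    measurable_const)).exists_lt_isCompact hneg
  have hKQ : Kp ∪ Kn ⊆ Q :=
    union_subset (hKp.trans inter_subset_left) (hKn.trans inter_subset_left)
  have hDconv : TendstoInMeasure (volume.restrict (Kp ∪ Kn)) (fun k => fderiv ℝ (fk k)) atTop
      (fderiv ℝ f) :=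
    tendstoInMeasure_of_tendsto_eLpNorm (ENNReal.ofReal_pos.2 (by linarith)).ne'
      (fun k => (measurable_fderiv ℝ (fk k)).aestronglyMeasurable)
      (measurable_fderiv ℝ f).aestronglyMeasurable (hconv _ hKQ (hKpc.union hKnc)).2
  rcases hDconv.ae_nonneg_or_ae_nonpos ContinuousLinearMap.continuous_det fun k =>
      (hsign k).imp (ae_restrict_of_ae_restrict_of_subset hKQ)
        (ae_restrict_of_ae_restrict_of_subset hKQ) with hJ | hJ
  · exact hKn0.ne' (measure_eq_zero_of_ae_restrict_of_forall_not hKnc.measurableSet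
      subset_union_right hJ fun x hx => not_le.2 (hKn hx).2)
  · exact hKp0.ne' (measure_eq_zero_of_ae_restrict_of_forall_not hKpc.measurableSet
      subset_union_left hJ fun x hx => not_le.2 (hKp hx).2)

/-- a `W^{1,p}` homeomorphism of `(-1,1)ⁿ` whose Jacobian changes sign on
sets of positive measure cannot be approximated in `W^{1,p}_loc` by locally Lipschitz
maps with Jacobians of constant a.e. sign. -/
theorem stmt_10 (n : ℕ) (hn : 4 ≤ n) (p : ℝ) (hp1 : 1 ≤ p) (hp2 : p < (n / 2 : ℕ))
    (Q : Set (Fin n → ℝ)) (hQ : Q = Set.pi univ fun _ : Fin n => Ioo (-1 : ℝ) 1)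
    (f : (Fin n → ℝ) → (Fin n → ℝ))
    -- f is a homeomorphism of Q onto its image
    (hfc : ContinuousOn f Q) (hfinj : InjOn f Q)
    -- f belongs to W^{1,p}(Q, ℝⁿ)
    (hfLp : eLpNorm f (ENNReal.ofReal p) (volume.restrict Q) < ⊤)
    (hDfLp : eLpNorm (fun x => fderiv ℝ f x) (ENNReal.ofReal p) (volume.restrict Q) < ⊤)
    -- the Jacobian changes sign on sets of positive measure
    (hpos : 0 < volume {x ∈ Q | 0 < jacobian f x})
    (hneg : 0 < volume {x ∈ Q | jacobian f x < 0}) :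
    ¬ ∃ fk : ℕ → (Fin n → ℝ) → (Fin n → ℝ),
      -- each fk is locally Lipschitz on Q
      (∀ k, ∀ x ∈ Q, ∃ ε > 0, ∃ K : NNReal, LipschitzOnWith K (fk k) (ball x ε ∩ Q)) ∧
      -- each fk has a Jacobian of constant a.e. sign
      (∀ k, (∀ᵐ x ∂(volume.restrict Q), 0 ≤ jacobian (fk k) x) ∨
            (∀ᵐ x ∂(volume.restrict Q), jacobian (fk k) x ≤ 0)) ∧
      -- fk → f in W^{1,p}_loc(Q, ℝⁿ)
      (∀ K : Set (Fin n → ℝ), K ⊆ Q → IsCompact K →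
        Tendsto (fun k => eLpNorm (fun x => fk k x - f x) (ENNReal.ofReal p)
          (volume.restrict K)) atTop (nhds 0) ∧
        Tendsto (fun k => eLpNorm (fun x => fderiv ℝ (fk k) x - fderiv ℝ f x)
          (ENNReal.ofReal p) (volume.restrict K)) atTop (nhds 0)) :=
  stmt_10_general n p hp1 Q hQ f hpos hneg
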